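/- arXiv:0704.2596 — 5 statements merged into one kernel-verified Lean document; each statement's English description precedes it below -/
import Mathlib

section
/- Let C be a linear [n,k,d]_q code over F_q with full-rank generator matrix G ∈ F_q^{k×n} such that gcd(d,q) = 1 and the Hamming weight of every codeword of C is congruent to 0 or to d modulo q. Then there exists a column vector x ∈ F_q^k such that the code C' generated by (G | x) ∈ F_q^{k×(n+1)} is an [n+1, k, d+1]_q code all of whose codeword weights are congruent to 0 or to d+1 modulo q. -/
/-!
Write `w(v) ∈ ZMod q` for the weight of the codeword `vG` modulo `q = |F|`. Counting coordinates,
`∑_{t ∈ F} w(u + t v) = -w(v)`. With all residues in `{0, d}` and `d` a unit, this forces the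
messages of residue `0` to form a subspace `W`; a minimum-weight message `v₀` has residue `d ≠ 0`,
and every coset `u + F v₀` meets `W`, so `W` is a hyperplane. Taking the new column `x` with
`W = {v | v ⬝ᵥ x = 0}`, the appended coordinate raises exactly the weights `≡ d` by one.
-/

open Matrix

section HammingWeight

variable {F ι : Type*} [Field F] [Fintype F] [DecidableEq F] [Fintype ι]

theorem sum_boole_add_mul_ne_zero (a b : F) :
    ∑ t : F, (if a + t * b ≠ 0 then 1 else 0 : ZMod (Fintype.card F)) =
      if b ≠ 0 then -1 else 0 := by
  have hconst (c : ZMod (Fintype.card F)) : ∑ _t : F, c = 0 := by simp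
  by_cases hb : b = 0
  · simp [hb, hconst]
  · have hbij : Function.Bijective fun t : F => a + t * b :=
      ((Equiv.mulRight₀ b hb).trans (Equiv.addLeft a)).bijective
    rw [if_pos hb, Fintype.sum_bijective _ hbij _ (fun s => if s ≠ 0 then 1 else 0) fun _ => rfl]
    have hboole (s : F) : (if s ≠ 0 then 1 else 0 : ZMod (Fintype.card F)) =
        1 - if s = 0 then 1 else 0 := by
      split_ifs <;> simp_all
    simp [hboole, Finset.sum_sub_distrib, hconst]

theorem sum_hammingNorm_add_smul (a b : ι → F) :
    ∑ t : F, (hammingNorm (a + t • b) : ZMod (Fintype.card F)) = -hammingNorm b := by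
  simp only [hammingNorm, Finset.natCast_card_filter, Pi.add_apply, Pi.smul_apply, smul_eq_mul]
  rw [Finset.sum_comm]
  simp_rw [sum_boole_add_mul_ne_zero, ← Finset.sum_neg_distrib]
  exact Finset.sum_congr rfl fun i _ => by split_ifs <;> simp

end HammingWeight

theorem hammingNorm_sum_elim {F ι κ : Type*} [Zero F] [DecidableEq F] [Fintype ι] [Fintype κ]
    (f : ι → F) (g : κ → F) :
    hammingNorm (Sum.elim f g) = hammingNorm f + hammingNorm g := by
  simp only [hammingNorm, Finset.card_filter, Fintype.sum_sum_type, Sum.elim_inl, Sum.elim_inr]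
  rfl

theorem Submodule.exists_dual_ker_eq {K M : Type*} [Field K] [AddCommGroup M] [Module K M]
    {W : Submodule K M} {v₀ : M} (hv₀ : v₀ ∉ W) (hcover : ∀ u, ∃ t : K, u + t • v₀ ∈ W) :
    ∃ f : Module.Dual K M, LinearMap.ker f = W := by
  obtain ⟨f, hfv₀, hfW⟩ := W.exists_dual_map_eq_bot_of_notMem hv₀ inferInstance
  refine ⟨f, le_antisymm (fun u hu => ?_) (LinearMap.le_ker_iff_map.2 hfW)⟩
  obtain ⟨t, ht⟩ := hcover u
  have ht0 : t * f v₀ = 0 := by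
    simpa [LinearMap.mem_ker.1 hu] using LinearMap.le_ker_iff_map.2 hfW ht
  simpa [(mul_eq_zero.1 ht0).resolve_right hfv₀] using ht

namespace Matrix

variable {F κ ι : Type*} [Field F] [Fintype F] [DecidableEq F] [Fintype κ] [Fintype ι]

def weightMod (G : Matrix κ ι F) (v : κ → F) : ZMod (Fintype.card F) :=
  hammingNorm (v ᵥ* G)

variable (G : Matrix κ ι F) {d : ZMod (Fintype.card F)}

theorem sum_weightMod_add_smul (u v : κ → F) :
    ∑ t : F, G.weightMod (u + t • v) = -G.weightMod v := by
  simp only [weightMod, add_vecMul, smul_vecMul, sum_hammingNorm_add_smul]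

@[simp]
theorem weightMod_zero : G.weightMod 0 = 0 := by
  simp [weightMod]

theorem weightMod_smul {c : F} (hc : c ≠ 0) (v : κ → F) :
    G.weightMod (c • v) = G.weightMod v := by
  rw [weightMod, weightMod, smul_vecMul, hammingNorm_smul fun _ => IsSMulRegular.of_ne_zero hc]

theorem weightMod_add_eq_zero (hd : IsUnit d) (hw : ∀ v, G.weightMod v = 0 ∨ G.weightMod v = d)
    {u v : κ → F} (hu : G.weightMod u = 0) (hv : G.weightMod v = 0) :
    G.weightMod (u + v) = 0 := by
  -- The `t` of nonzero residue each contribute `d` to `∑ₜ w(u + t v) = 0`; `t = 0` is not one of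
  -- them, so there are fewer than `q` of them, yet a multiple of `q`.
  set S := Finset.univ.filter fun t : F => G.weightMod (u + t • v) ≠ 0
  have hsum : (S.card : ZMod (Fintype.card F)) * d = 0 :=
    calc (S.card : ZMod (Fintype.card F)) * d = ∑ t ∈ S, G.weightMod (u + t • v) := by
          rw [Finset.sum_congr rfl fun t ht => (hw _).resolve_left (Finset.mem_filter.1 ht).2,
            Finset.sum_const, nsmul_eq_mul]
      _ = ∑ t, G.weightMod (u + t • v) := Finset.sum_filter_ne_zero _
      _ = 0 := by rw [sum_weightMod_add_smul, hv, neg_zero]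
  have hS : S.card < Fintype.card F :=
    Finset.card_lt_univ_of_notMem (x := 0) (by simp [S, hu])
  have hS0 : S = ∅ := by
    rw [← Finset.card_eq_zero]
    refine Nat.eq_zero_of_dvd_of_lt ?_ hS
    rw [← ZMod.natCast_eq_zero_iff]
    exact (hd.mul_left_eq_zero).1 hsum
  simpa [S] using Finset.eq_empty_iff_forall_notMem.1 hS0 1

theorem exists_weightMod_add_smul_eq_zero (hw : ∀ v, G.weightMod v = 0 ∨ G.weightMod v = d)
    {v₀ : κ → F} (hv₀ : G.weightMod v₀ ≠ 0) (u : κ → F) :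
    ∃ t : F, G.weightMod (u + t • v₀) = 0 := by
  by_contra! h
  have hsum := G.sum_weightMod_add_smul u v₀
  rw [Finset.sum_congr rfl fun t _ => (hw _).resolve_left (h t)] at hsum
  simp only [Finset.sum_const, Finset.card_univ, nsmul_eq_mul, ZMod.natCast_self, zero_mul,
    zero_eq_neg] at hsum
  exact hv₀ hsum

theorem exists_dotProduct_eq_zero_iff_weightMod_eq_zero (hd : IsUnit d)
    (hw : ∀ v, G.weightMod v = 0 ∨ G.weightMod v = d) {v₀ : κ → F} (hv₀ : G.weightMod v₀ ≠ 0) :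
    ∃ x : κ → F, ∀ v, v ⬝ᵥ x = 0 ↔ G.weightMod v = 0 := by
  classical
  let W : Submodule F (κ → F) :=
    { carrier := {v | G.weightMod v = 0}
      add_mem' := G.weightMod_add_eq_zero hd hw
      zero_mem' := G.weightMod_zero
      smul_mem' := fun c v hv => by
        by_cases hc : c = 0
        · simp [hc]
        · simpa [G.weightMod_smul hc] using hv }
  obtain ⟨f, hf⟩ := W.exists_dual_ker_eq hv₀ (G.exists_weightMod_add_smul_eq_zero hw hv₀)
  refine ⟨(dotProductEquiv F κ).symm f, fun v => ?_⟩
  rw [dotProduct_comm, ← dotProductEquiv_apply_apply, LinearEquiv.apply_symm_apply,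
    ← LinearMap.mem_ker, hf]
  rfl

theorem linearIndependent_rows_fromCols {R m n₁ n₂ : Type*} [Ring R] {A : Matrix m n₁ R}
    (B : Matrix m n₂ R) (hA : LinearIndependent R fun i => A i) :
    LinearIndependent R fun i => fromCols A B i :=
  LinearIndependent.of_comp (LinearMap.funLeft R R Sum.inl) hA

theorem hammingNorm_vecMul_fromCols_replicateCol {R : Type*} [Semiring R] [DecidableEq R]
    (A : Matrix κ ι R) (x v : κ → R) :
    hammingNorm (v ᵥ* fromCols A (replicateCol (Fin 1) x)) =
      hammingNorm (v ᵥ* A) + if v ⬝ᵥ x = 0 then 0 else 1 := by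
  rw [vecMul_fromCols, hammingNorm_sum_elim]
  congr 1
  simp only [hammingNorm, vecMul, replicateCol, of_apply]
  split_ifs <;> simp_all

end Matrix

/-- **Theorem 1 (Hill–Lizak).**
Let `C` be an `[n,k,d]_q` code with `gcd(d,q) = 1` and with all codeword
weights congruent to `0` or `d` modulo `q`.  Then `C` can be extended to an
`[n+1, k, d+1]_q` code all of whose weights are congruent to `0` or `d+1`
modulo `q`. -/
theorem hill_lizak_extension
    {F : Type*} [Field F] [Fintype F] [DecidableEq F]
    (q n k d : ℕ) (hq : Fintype.card F = q)
    (G : Matrix (Fin k) (Fin n) F)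
    (hG : LinearIndependent F (fun i => G i))
    (hmin : ∀ v : Fin k → F, v ≠ 0 → d ≤ hammingNorm (Matrix.vecMul v G))
    (hex : ∃ v : Fin k → F, v ≠ 0 ∧ hammingNorm (Matrix.vecMul v G) = d)
    (hgcd : Nat.gcd d q = 1)
    (hwts : ∀ v : Fin k → F,
      hammingNorm (Matrix.vecMul v G) ≡ 0 [MOD q] ∨
      hammingNorm (Matrix.vecMul v G) ≡ d [MOD q]) :
    ∃ x : Fin k → F,
      LinearIndependent F (fun i => Matrix.fromCols G (Matrix.replicateCol (Fin 1) x) i) ∧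
      (∀ v : Fin k → F, v ≠ 0 →
        d + 1 ≤ hammingNorm (Matrix.vecMul v (Matrix.fromCols G (Matrix.replicateCol (Fin 1) x)))) ∧
      (∃ v : Fin k → F, v ≠ 0 ∧
        hammingNorm (Matrix.vecMul v (Matrix.fromCols G (Matrix.replicateCol (Fin 1) x))) = d + 1) ∧
      (∀ v : Fin k → F,
        hammingNorm (Matrix.vecMul v (Matrix.fromCols G (Matrix.replicateCol (Fin 1) x))) ≡ 0 [MOD q] ∨
        hammingNorm (Matrix.vecMul v (Matrix.fromCols G (Matrix.replicateCol (Fin 1) x))) ≡ d + 1 [MOD q]) := by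
  subst hq
  have : Fact (1 < Fintype.card F) := ⟨Fintype.one_lt_card⟩
  have hd : IsUnit (d : ZMod (Fintype.card F)) := (ZMod.isUnit_iff_coprime d _).2 hgcd
  have hzero (v : Fin k → F) : G.weightMod v = 0 ↔ hammingNorm (v ᵥ* G) ≡ 0 [MOD Fintype.card F] :=
    (ZMod.natCast_eq_zero_iff _ _).trans Nat.modEq_zero_iff_dvd.symm
  have hw (v : Fin k → F) : G.weightMod v = 0 ∨ G.weightMod v = d :=
    (hwts v).imp (hzero v).2 (ZMod.natCast_eq_natCast_iff _ _ _).2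
  obtain ⟨v₀, hv₀, hv₀d⟩ := hex
  have hv₀ne : G.weightMod v₀ ≠ 0 := by rw [weightMod, hv₀d]; exact hd.ne_zero
  obtain ⟨x, hx⟩ := G.exists_dotProduct_eq_zero_iff_weightMod_eq_zero hd hw hv₀ne
  refine ⟨x, linearIndependent_rows_fromCols _ hG, fun v hv => ?_, ⟨v₀, hv₀, ?_⟩, fun v => ?_⟩ <;>
    rw [hammingNorm_vecMul_fromCols_replicateCol] <;> split_ifs with h
  · have hne : hammingNorm (v ᵥ* G) ≠ d := by
      intro hvd
      have hvmod : G.weightMod v = d := by rw [weightMod, hvd]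
      exact hd.ne_zero (hvmod ▸ (hx v).1 h)
    have := hmin v hv
    omega
  · exact Nat.succ_le_succ (hmin v hv)
  · exact absurd ((hx v₀).1 h) hv₀ne
  · rw [hv₀d]
  · exact Or.inl ((hzero v).1 ((hx v).1 h))
  · exact Or.inr (((hwts v).resolve_left fun h0 => h ((hx v).2 ((hzero v).2 h0))).add_right 1)
end

section
/- Let C be a binary linear [n,k,d]_2 code with full-rank generator matrix G ∈ F_2^{k×n} and odd minimum distance d, and let J_d = {v ∈ F_2^k : wgt(vG) = d}. Let J'_d ⊆ J_d be any subset whose F_2-linear span equals the linear span of J_d. If x ∈ F_2^k satisfies Σ_{i=1}^k v_i x_i = 1 for all v ∈ J'_d, then x satisfies Σ_{i=1}^k v_i x_i = 1 for all v ∈ J_d. -/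
lemma zmod2_ne_zero {a : ZMod 2} (h : a ≠ 0) : a = 1 := by
  revert h; revert a; decide

lemma cast_hammingNorm_zmod2 {n : ℕ} (w : Fin n → ZMod 2) :
    (hammingNorm w : ZMod 2) = ∑ j, w j := by
  unfold hammingNorm
  rw [← Finset.sum_filter_ne_zero (Finset.univ (α := Fin n)) (f := w)]
  rw [Finset.sum_congr rfl (fun j hj => zmod2_ne_zero (Finset.mem_filter.mp hj).2),
    Finset.sum_const, nsmul_eq_mul, mul_one]

/-- **A spanning subset of `J_d` suffices (binary case).**
Let `C` be a binary linear `[n,k,d]_2` code with full-rank generator matrix `G`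
and odd minimum distance `d`, let `J_d = {v : wgt(vG) = d}`, and let
`J'_d ⊆ J_d` be a subset with the same `F_2`-linear span as `J_d`.  If
`x ∈ F_2^k` satisfies `Σᵢ vᵢ xᵢ = 1` for all `v ∈ J'_d`, then it satisfies
`Σᵢ vᵢ xᵢ = 1` for all `v ∈ J_d`. -/
theorem binary_extension_spanning_subset
    (n k d : ℕ) (hd : Odd d)
    (G : Matrix (Fin k) (Fin n) (ZMod 2))
    (hG : LinearIndependent (ZMod 2) (fun i => G i))
    (hmin : ∀ v : Fin k → ZMod 2, v ≠ 0 → d ≤ hammingNorm (Matrix.vecMul v G))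
    (hex : ∃ v : Fin k → ZMod 2, v ≠ 0 ∧ hammingNorm (Matrix.vecMul v G) = d)
    (J' : Set (Fin k → ZMod 2))
    (hsub : J' ⊆ {v : Fin k → ZMod 2 | hammingNorm (Matrix.vecMul v G) = d})
    (hspan : Submodule.span (ZMod 2) J' =
      Submodule.span (ZMod 2) {v : Fin k → ZMod 2 | hammingNorm (Matrix.vecMul v G) = d})
    (x : Fin k → ZMod 2)
    (hx : ∀ v ∈ J', ∑ i, v i * x i = 1) :
    ∀ v : Fin k → ZMod 2, hammingNorm (Matrix.vecMul v G) = d → ∑ i, v i * x i = 1 := by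
  have hd1 : (d : ZMod 2) = 1 := by
    rw [← ZMod.natCast_mod d 2, Nat.odd_iff.mp hd, Nat.cast_one]
  -- the linear functional v ↦ Σᵢ vᵢxᵢ + Σⱼ (vG)ⱼ
  let L : (Fin k → ZMod 2) →ₗ[ZMod 2] ZMod 2 :=
  { toFun := fun v => (∑ i, v i * x i) + ∑ j, Matrix.vecMul v G j
    map_add' := by
      intro a b
      simp [Matrix.add_vecMul, add_mul, Finset.sum_add_distrib]
      ring
    map_smul' := by
      intro c a
      simp [Matrix.smul_vecMul, smul_eq_mul, Finset.mul_sum, mul_assoc, mul_add] }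
  have hker : Submodule.span (ZMod 2)
      {v : Fin k → ZMod 2 | hammingNorm (Matrix.vecMul v G) = d} ≤ LinearMap.ker L := by
    rw [← hspan]
    rw [Submodule.span_le]
    intro v hv
    have h1 := hx v hv
    have h2 : hammingNorm (Matrix.vecMul v G) = d := hsub hv
    simp only [SetLike.mem_coe, LinearMap.mem_ker]
    show (∑ i, v i * x i) + ∑ j, Matrix.vecMul v G j = 0
    rw [h1, ← cast_hammingNorm_zmod2, h2, hd1]
    decide
  intro v hv
  have hmem : v ∈ Submodule.span (ZMod 2)
      {v : Fin k → ZMod 2 | hammingNorm (Matrix.vecMul v G) = d} :=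
    Submodule.subset_span hv
  have h0 : L v = 0 := hker hmem
  have h0' : (∑ i, v i * x i) + ∑ j, Matrix.vecMul v G j = 0 := h0
  have h2 : (∑ j, Matrix.vecMul v G j) = 1 := by
    rw [← cast_hammingNorm_zmod2, hv, hd1]
  rw [h2] at h0'
  -- a + 1 = 0 in ZMod 2 gives a = 1
  have : ∀ a : ZMod 2, a + 1 = 0 → a = 1 := by decide
  exact this _ h0'
end

section
/- Let C be a linear [n,k,d]_q code over F_q with full-rank generator matrix G ∈ F_q^{k×n}, and let J_d = {v ∈ F_q^k : wgt(vG) = d}. Then there exists a matrix X ∈ F_q^{k×m} such that the code generated by (G | X) ∈ F_q^{k×(n+m)} has dimension k and minimum Hamming distance at least d+1 if and only if the system of polynomial equations Π_{j=1}^m ((Σ_{i=1}^k v_i X_{ij})^{q-1} − 1) = 0, one equation for each v ∈ J_d, has a solution X ∈ F_q^{k×m}. -/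
/-!
Since the Hamming weight is additive over the column split `(G | X)`, a nonzero message `v`
gains weight in the extended code exactly when `v X ≠ 0`. Messages with `wgt(v G) > d` already
have weight at least `d + 1`, so the extended code has minimum distance at least `d + 1` iff
`v X ≠ 0` for every `v ∈ J_d`. By Fermat's little theorem in `F_q`, `x ^ (q - 1) - 1` vanishes
exactly at the nonzero `x`, so the product over the columns of `X` vanishes iff `v X ≠ 0`.
Finally the rows of `(G | X)` stay independent because projecting them to the first `n`
coordinates gives the rows of `G`.
-/

open Matrix

theorem hammingNorm_sumElim {α β M : Type*} [Fintype α] [Fintype β] [Zero M] [DecidableEq M]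
    (f : α → M) (g : β → M) :
    hammingNorm (Sum.elim f g) = hammingNorm f + hammingNorm g := by
  simp only [hammingNorm, Finset.card_filter, Fintype.sum_sum_type, Sum.elim_inl, Sum.elim_inr]
  rfl

theorem Matrix.linearIndependent_fromCols {R ι m n : Type*} [Semiring R] {A : Matrix ι m R}
    (hA : LinearIndependent R fun i => A i) (B : Matrix ι n R) :
    LinearIndependent R fun i => fromCols A B i :=
  .of_comp (LinearMap.funLeft R R Sum.inl) hA

theorem FiniteField.pow_card_sub_one_sub_one_eq_zero_iff {K : Type*} [Field K] [Fintype K]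
    {a : K} : a ^ (Fintype.card K - 1) - 1 = 0 ↔ a ≠ 0 := by
  refine ⟨fun h ha => ?_, fun ha => by rw [pow_card_sub_one_eq_one a ha, sub_self]⟩
  rw [ha, zero_pow (Nat.sub_ne_zero_of_lt Fintype.one_lt_card), zero_sub, neg_eq_zero] at h
  exact one_ne_zero h

theorem FiniteField.prod_pow_card_sub_one_sub_one_eq_zero_iff {K ι : Type*} [Field K]
    [Fintype K] [Fintype ι] (x : ι → K) :
    ∏ j, (x j ^ (Fintype.card K - 1) - 1) = 0 ↔ x ≠ 0 := by
  simp only [Finset.prod_eq_zero_iff, Finset.mem_univ, true_and,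
    pow_card_sub_one_sub_one_eq_zero_iff, ne_eq, funext_iff, not_forall, Pi.zero_apply]

theorem Matrix.forall_succ_le_hammingNorm_vecMul_fromCols_iff {R ι m n : Type*} [Semiring R]
    [DecidableEq R] [Fintype ι] [Fintype m] [Fintype n] {A : Matrix ι m R} {d : ℕ} (hd : 0 < d)
    (hmin : ∀ v : ι → R, v ≠ 0 → d ≤ hammingNorm (v ᵥ* A)) (B : Matrix ι n R) :
    (∀ v : ι → R, v ≠ 0 → d + 1 ≤ hammingNorm (v ᵥ* fromCols A B)) ↔
      ∀ v : ι → R, hammingNorm (v ᵥ* A) = d → v ᵥ* B ≠ 0 := by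
  simp only [vecMul_fromCols, hammingNorm_sumElim]
  constructor
  · intro h v hv
    have hv0 : v ≠ 0 := by
      rintro rfl
      rw [zero_vecMul, hammingNorm_zero] at hv
      omega
    have := h v hv0
    exact hammingNorm_pos_iff.1 (by omega)
  · intro h v hv
    rcases (hmin v hv).eq_or_lt with heq | hlt
    · have := hammingNorm_pos_iff.2 (h v heq.symm)
      omega
    · omega

/-- **General extensions via polynomial equations.**
A linear `[n,k,d]_q` code with full-rank generator matrix `G` can be extended
to a code of length `n+m`, dimension `k`, and minimum distance at least `d+1`
(generated by `(G|X)`) if and only if the system of polynomial equations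
`Π_{j=1}^m ((Σᵢ vᵢ X_{ij})^(q-1) − 1) = 0`, one equation for each
`v ∈ J_d = {v : wgt(vG) = d}`, has a solution `X ∈ F_q^{k×m}`. -/
theorem general_extension_polynomial_system
    {F : Type*} [Field F] [Fintype F] [DecidableEq F]
    (q n k m d : ℕ) (hq : Fintype.card F = q)
    (G : Matrix (Fin k) (Fin n) F)
    (hG : LinearIndependent F (fun i => G i))
    (hmin : ∀ v : Fin k → F, v ≠ 0 → d ≤ hammingNorm (Matrix.vecMul v G))
    (hex : ∃ v : Fin k → F, v ≠ 0 ∧ hammingNorm (Matrix.vecMul v G) = d) :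
    (∃ X : Matrix (Fin k) (Fin m) F,
        LinearIndependent F (fun i => Matrix.fromCols G X i) ∧
        (∀ v : Fin k → F, v ≠ 0 →
          d + 1 ≤ hammingNorm (Matrix.vecMul v (Matrix.fromCols G X))))
      ↔
    (∃ X : Matrix (Fin k) (Fin m) F,
        ∀ v : Fin k → F, hammingNorm (Matrix.vecMul v G) = d →
          ∏ j, ((∑ i, v i * X i j) ^ (q - 1) - 1) = 0) := by
  subst hq
  obtain ⟨v₀, hv₀, hv₀d⟩ := hex
  have hd : 0 < d :=
    hv₀d ▸ hammingNorm_pos_iff.2 (((vecMul_injective_iff.2 hG).ne_iff' (zero_vecMul G)).2 hv₀)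
  have hsystem : ∀ (X : Matrix (Fin k) (Fin m) F) (v : Fin k → F),
      ∏ j, ((∑ i, v i * X i j) ^ (Fintype.card F - 1) - 1) = 0 ↔ v ᵥ* X ≠ 0 :=
    fun X v => FiniteField.prod_pow_card_sub_one_sub_one_eq_zero_iff (v ᵥ* X)
  simp only [forall_succ_le_hammingNorm_vecMul_fromCols_iff hd hmin, hsystem]
  exact ⟨fun ⟨X, _, hX⟩ => ⟨X, hX⟩, fun ⟨X, hX⟩ => ⟨X, linearIndependent_fromCols hG X, hX⟩⟩
end

section
/- Let I_1, …, I_μ be subsets of {1, …, n}, each of cardinality k, and for j = 1, …, μ define the relative rank r_j = k − |I_j ∩ (I_1 ∪ ⋯ ∪ I_{j−1})| (with r_1 = k). Let c ∈ F_q^n be a vector such that for every j ∈ {1, …, μ} the number of nonzero coordinates of c inside I_j is at least w+1. Then the Hamming weight of c satisfies wgt(c) ≥ Σ_{j=1}^μ max(0, (w+1) − (k − r_j)). -/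
/-!
The sets `I_j \ (I_1 ∪ ⋯ ∪ I_{j-1})` are pairwise disjoint, so the support of `c` meets them in
disjoint pieces whose sizes add up to at most `wgt(c)`. Inside `I_j`, at most
`|I_j ∩ (I_1 ∪ ⋯ ∪ I_{j-1})| = k - r_j` of the `w + 1` nonzero coordinates can fall outside the
`j`-th piece.
-/

namespace Finset

variable {α ι : Type*} [DecidableEq α]

theorem card_filter_le_card_filter_disjointed_add [Preorder ι] [LocallyFiniteOrderBot ι]
    (I : ι → Finset α) (p : α → Prop) [DecidablePred p] (j : ι) :
    #{x ∈ I j | p x} ≤ #{x ∈ disjointed I j | p x} + #(I j ∩ (Iio j).sup I) := by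
  refine (card_le_card fun x hx => ?_).trans (card_union_le _ _)
  simp only [mem_filter] at hx
  by_cases hprev : x ∈ (Iio j).sup I
  · exact mem_union_right _ (mem_inter.2 ⟨hx.1, hprev⟩)
  · exact mem_union_left _ (mem_filter.2 ⟨mem_sdiff.2 ⟨hx.1, hprev⟩, hx.2⟩)

theorem sum_card_filter_disjointed_le [LinearOrder ι] [LocallyFiniteOrderBot ι] [Fintype ι]
    [Fintype α] (I : ι → Finset α) (p : α → Prop) [DecidablePred p] :
    ∑ j, #{x ∈ disjointed I j | p x} ≤ #{x | p x} := by
  rw [← card_biUnion]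
  · exact card_le_card fun x hx => by simp_all
  · exact fun j _ l _ hjl => disjoint_filter_filter (disjoint_disjointed I hjl)

end Finset

open scoped Finset

theorem weight_lower_bound_information_sets_general
    {F : Type*} [Field F] [DecidableEq F]
    (n k μ w : ℕ)
    (I : Fin μ → Finset (Fin n))
    (hcard : ∀ j, (I j).card = k)
    (r : Fin μ → ℕ)
    (hr : ∀ j, r j = k - ((I j) ∩ ((Finset.univ.filter (fun l => l < j)).biUnion I)).card)
    (c : Fin n → F)
    (hc : ∀ j, w + 1 ≤ ((I j).filter (fun i => c i ≠ 0)).card) :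
    (∑ j, max 0 ((w : ℤ) + 1 - ((k : ℤ) - (r j : ℤ)))) ≤ (hammingNorm c : ℤ) := by
  have hterm (j : Fin μ) :
      max 0 ((w : ℤ) + 1 - (k - r j)) ≤ (#{i ∈ disjointed I j | c i ≠ 0} : ℤ) := by
    rw [hr j, Finset.filter_gt_eq_Iio, ← Finset.sup_eq_biUnion]
    -- `hprev` makes the truncated subtraction `k - #(…)` in `hr` exact.
    have hprev : #(I j ∩ (Finset.Iio j).sup I) ≤ k :=
      hcard j ▸ Finset.card_le_card Finset.inter_subset_left
    have hsplit := Finset.card_filter_le_card_filter_disjointed_add I (c · ≠ 0) j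
    have hsupport := hc j
    push_cast [Nat.cast_sub hprev]
    omega
  calc (∑ j, max 0 ((w : ℤ) + 1 - (k - r j)))
      ≤ ∑ j, (#{i ∈ disjointed I j | c i ≠ 0} : ℤ) := Finset.sum_le_sum fun j _ => hterm j
    _ ≤ hammingNorm c := by exact_mod_cast Finset.sum_card_filter_disjointed_le I (c · ≠ 0)

/-- **Lower bound on the weight from information sets.**
Let `I_1, …, I_μ ⊆ {1,…,n}` each have cardinality `k`, and let
`r_j = k − |I_j ∩ (I_1 ∪ ⋯ ∪ I_{j−1})|` be the relative ranks.  If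
`c ∈ F_q^n` has at least `w+1` nonzero coordinates inside each `I_j`, then
`wgt(c) ≥ Σ_{j=1}^μ max(0, (w+1) − (k − r_j))`. -/
theorem weight_lower_bound_information_sets
    {F : Type*} [Field F] [Fintype F] [DecidableEq F]
    (n k μ w : ℕ)
    (I : Fin μ → Finset (Fin n))
    (hcard : ∀ j, (I j).card = k)
    (r : Fin μ → ℕ)
    (hr : ∀ j, r j = k - ((I j) ∩ ((Finset.univ.filter (fun l => l < j)).biUnion I)).card)
    (c : Fin n → F)
    (hc : ∀ j, w + 1 ≤ ((I j).filter (fun i => c i ≠ 0)).card) :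
    (∑ j, max 0 ((w : ℤ) + 1 - ((k : ℤ) - (r j : ℤ)))) ≤ (hammingNorm c : ℤ) :=
  weight_lower_bound_information_sets_general n k μ w I hcard r hr c hc
end

section
/- Let C ⊆ F_q^n be a k-dimensional linear code and let G_1, …, G_μ ∈ F_q^{k×n} be generator matrices of C that are systematic with respect to information sets I_1, …, I_μ ⊆ {1,…,n} (i.e., |I_j| = k and the columns of G_j indexed by I_j form the identity matrix, so the projection of C onto the coordinates I_j is bijective). Define the relative ranks r_j = k − |I_j ∩ (I_1 ∪ ⋯ ∪ I_{j−1})|. Then every nonzero codeword c ∈ C either can be written as c = i·G_j for some j ∈ {1,…,μ} and some information vector i ∈ F_q^k with wgt(i) ≤ w, or satisfies wgt(c) ≥ Σ_{j=1}^μ max(0, (w+1) − (k − r_j)). -/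
/-!
If `c` is not of the form `i ⬝ G_j` with `wgt(i) ≤ w`, then since `c = (c|_{I_j}) ⬝ G_j` for every
`j`, `c` has more than `w` nonzero entries on each `I_j`. Charge to `j` only those support
positions in `I_j` that lie in no earlier `I_l`; at most `k - r_j` positions of `I_j` are earlier,
so at least `w + 1 - (k - r_j)` are charged to `j`, and different `j` are charged disjoint sets
of positions, so the charges add up to at most `wgt(c)`.
-/

open Finset Function

section EarlierUnion

variable {ι α : Type*} [Fintype ι] [LinearOrder ι] [DecidableEq α]

def earlierUnion (I : ι → Finset α) (j : ι) : Finset α :=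
  (univ.filter fun l => l < j).biUnion I

theorem pairwise_disjoint_sdiff_earlierUnion (I : ι → Finset α) :
    Pairwise (Disjoint on fun j => I j \ earlierUnion I j) :=
  (pairwise_disjoint_on _).2 fun a b hlt => disjoint_left.2 fun x hxa hxb =>
    (mem_sdiff.1 hxb).2 <| mem_biUnion.2 ⟨a, by simpa using hlt, (mem_sdiff.1 hxa).1⟩

theorem card_inter_sub_card_inter_le_card_sdiff_inter (A S U : Finset α) :
    #(A ∩ S) - #(A ∩ U) ≤ #((A \ U) ∩ S) := by
  have hsub : A ∩ S ⊆ (A \ U) ∩ S ∪ A ∩ U := by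
    intro x hx
    by_cases hxU : x ∈ U <;> simp_all
  have := (card_le_card hsub).trans (card_union_le _ _)
  omega

theorem sum_card_inter_sub_card_inter_earlierUnion_le (I : ι → Finset α) (S : Finset α) :
    ∑ j, (#(I j ∩ S) - #(I j ∩ earlierUnion I j)) ≤ #S :=
  calc ∑ j, (#(I j ∩ S) - #(I j ∩ earlierUnion I j))
      ≤ ∑ j, #((I j \ earlierUnion I j) ∩ S) :=
        sum_le_sum fun _ _ => card_inter_sub_card_inter_le_card_sdiff_inter _ _ _
    _ = #(univ.biUnion fun j => (I j \ earlierUnion I j) ∩ S) :=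
        (card_biUnion fun _ _ _ _ hab =>
          (pairwise_disjoint_sdiff_earlierUnion I hab).mono inter_subset_left inter_subset_left).symm
    _ ≤ #S := card_le_card (biUnion_subset.2 fun _ _ => inter_subset_right)

end EarlierUnion

theorem Matrix.eq_vecMul_comp_of_mem_span_of_systematic {R κ ι : Type*} [Semiring R]
    [Fintype κ] [DecidableEq κ] {G : Matrix κ ι R} {e : κ → ι}
    (hsys : ∀ a b, G a (e b) = if b = a then 1 else 0) {c : ι → R}
    (hc : c ∈ Submodule.span R (Set.range G)) : c = Matrix.vecMul (c ∘ e) G := by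
  obtain ⟨x, rfl⟩ := (Submodule.mem_span_range_iff_exists_fun R).1 hc
  have hx : (∑ a, x a • G a) ∘ e = x := by
    funext b
    simp [Finset.sum_apply, hsys]
  rw [hx, Matrix.vecMul_eq_sum]

theorem hammingNorm_comp_of_injective {κ ι β : Type*} [Fintype κ] [Fintype ι] [DecidableEq ι]
    [Zero β] [DecidableEq β] {e : κ → ι} (he : Injective e) (c : ι → β) :
    hammingNorm (c ∘ e) = #(univ.image e ∩ ({i | c i ≠ 0} : Finset ι)) := by
  rw [inter_filter, inter_univ, filter_image, card_image_of_injective _ he]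
  rfl

theorem brouwer_zimmermann_bound_general
    {F : Type*} [Field F] [DecidableEq F]
    (n k μ w : ℕ)
    (C : Submodule F (Fin n → F))
    (G : Fin μ → Matrix (Fin k) (Fin n) F)
    (hgen : ∀ j, Submodule.span F (Set.range fun i => G j i) = C)
    (e : Fin μ → (Fin k → Fin n))
    (he : ∀ j, Function.Injective (e j))
    (hsys : ∀ j, ∀ a b : Fin k, G j a (e j b) = if b = a then (1 : F) else 0)
    (I : Fin μ → Finset (Fin n))
    (hI : ∀ j, I j = Finset.image (e j) Finset.univ)
    (r : Fin μ → ℕ)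
    (hr : ∀ j, r j = k - ((I j) ∩ ((Finset.univ.filter (fun l => l < j)).biUnion I)).card) :
    ∀ c ∈ C, c ≠ 0 →
      (∃ j, ∃ i : Fin k → F, hammingNorm i ≤ w ∧ c = Matrix.vecMul i (G j)) ∨
      (∑ j, max 0 ((w : ℤ) + 1 - ((k : ℤ) - (r j : ℤ)))) ≤ (hammingNorm c : ℤ) := by
  intro c hc _
  refine or_iff_not_imp_left.2 fun hlow => ?_
  set S : Finset (Fin n) := {i | c i ≠ 0}
  have hweight : ∀ j, w < #(I j ∩ S) := fun j => by
    have hrep := Matrix.eq_vecMul_comp_of_mem_span_of_systematic (hsys j) ((hgen j).symm ▸ hc)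
    rw [hI j, ← hammingNorm_comp_of_injective (he j)]
    exact lt_of_not_ge fun hle => hlow ⟨j, _, hle, hrep⟩
  have hcard : ∀ j, #(I j) = k := fun j => by
    rw [hI j, card_image_of_injective _ (he j), card_univ, Fintype.card_fin]
  calc ∑ j, max 0 ((w : ℤ) + 1 - ((k : ℤ) - (r j : ℤ)))
      ≤ ∑ j, ((#(I j ∩ S) - #(I j ∩ earlierUnion I j) : ℕ) : ℤ) := sum_le_sum fun j _ => by
        have hrj : r j = k - #(I j ∩ earlierUnion I j) := hr j
        have := hweight j
        have := hcard j ▸ card_le_card (inter_subset_left : I j ∩ earlierUnion I j ⊆ I j)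
        omega
    _ ≤ #S := mod_cast sum_card_inter_sub_card_inter_earlierUnion_le I S

/-- **Correctness of the Brouwer–Zimmermann enumeration bound.**
Let `C ⊆ F_q^n` be a `k`-dimensional code with systematic generator matrices
`G_1, …, G_μ` whose information sets are `I_1, …, I_μ` (the columns of `G_j`
indexed by `I_j`, arranged via the injection `e j : Fin k → Fin n`, form the
identity matrix), and let `r_j = k − |I_j ∩ (I_1 ∪ ⋯ ∪ I_{j−1})|` be the
relative ranks.  Then every nonzero codeword `c ∈ C` either equals `i · G_j`
for some `j` and some information vector `i` with `wgt(i) ≤ w`, or satisfies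
`wgt(c) ≥ Σ_{j=1}^μ max(0, (w+1) − (k − r_j))`. -/
theorem brouwer_zimmermann_bound
    {F : Type*} [Field F] [Fintype F] [DecidableEq F]
    (n k μ w : ℕ)
    (C : Submodule F (Fin n → F))
    (hdim : Module.finrank F C = k)
    (G : Fin μ → Matrix (Fin k) (Fin n) F)
    (hgen : ∀ j, Submodule.span F (Set.range fun i => G j i) = C)
    (e : Fin μ → (Fin k → Fin n))
    (he : ∀ j, Function.Injective (e j))
    (hsys : ∀ j, ∀ a b : Fin k, G j a (e j b) = if b = a then (1 : F) else 0)
    (I : Fin μ → Finset (Fin n))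
    (hI : ∀ j, I j = Finset.image (e j) Finset.univ)
    (r : Fin μ → ℕ)
    (hr : ∀ j, r j = k - ((I j) ∩ ((Finset.univ.filter (fun l => l < j)).biUnion I)).card) :
    ∀ c ∈ C, c ≠ 0 →
      (∃ j, ∃ i : Fin k → F, hammingNorm i ≤ w ∧ c = Matrix.vecMul i (G j)) ∨
      (∑ j, max 0 ((w : ℤ) + 1 - ((k : ℤ) - (r j : ℤ)))) ≤ (hammingNorm c : ℤ) :=
  brouwer_zimmermann_bound_general n k μ w C G hgen e he hsys I hI r hr
end
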